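/- arXiv:1712.00478 — 2 statements merged into one kernel-verified Lean document; each statement's English description precedes it below -/
import Mathlib

section
/- Let K be an infinite compact Hausdorff space which contains two disjoint closed subspaces that are homeomorphic to each other and have weight equal to w(K). Then the closed unit ball of C(K) contains a 2-equilateral set of cardinality w(K). -/
/-!
If `w(K) = ℵ₀`, pairwise disjoint open sets `Uₙ` with points `xₙ ∈ Uₙ` give Urysohn functions
equal to `1` at `xₙ` and to `-1` off `Uₙ`.

If `w(K) > ℵ₀`, fewer than `w(A)` continuous real functions cannot separate the points of the
compact space `A`: they would embed `A` into a product of copies of `ℝ`, whose subbasis of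
preimages of rational intervals is too small. So by transfinite recursion there are points
`xα ≠ yα` of `A` and Urysohn functions `wα` with `wα xα = 0`, `wα yα = 1` that no earlier `wβ`
separates. Let `ψ` clamp `1 - 4t` to `[-1, 1]` and glue `ψ ∘ wα` on `A` with
`ψ ∘ (1 - wα ∘ φ⁻¹)` on `B` by a Urysohn function for `A, B`. For `β < α` the common value
`t = wβ xα = wβ yα` is either `≥ 1/2`, and the two glued functions are `1` and `-1` at `xα`,
or `< 1/2`, and they are `1` and `-1` at `φ yα`.
-/

open Cardinal

/-- The weight of a topological space: the minimal infinite cardinality of a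
base for its topology. -/
noncomputable def weight (X : Type u) [TopologicalSpace X] : Cardinal.{u} :=
  ⨅ B : {B : Set (Set X) // TopologicalSpace.IsTopologicalBasis B}, max #B.1 ℵ₀

open TopologicalSpace Set Topology

theorem Cardinal.mk_setOf_finite_subset_le {α : Type u} (s : Set α) :
    #{t : Set α | t.Finite ∧ t ⊆ s} ≤ max #s ℵ₀ := by
  classical
  have hsub : {t : Set α | t.Finite ∧ t ⊆ s} ⊆
      range fun F : Finset s => Subtype.val '' (F : Set s) := by
    rintro t ⟨ht, hts⟩
    have ht' : (Subtype.val ⁻¹' t : Set s).Finite := ht.preimage Subtype.val_injective.injOn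
    obtain ⟨F, hF⟩ := ht'.exists_finset_coe
    refine ⟨F, ?_⟩
    simp only [hF, Subtype.image_preimage_coe, inter_eq_right.2 hts]
  calc #{t : Set α | t.Finite ∧ t ⊆ s}
      ≤ #(Finset s) := (mk_le_mk_of_subset hsub).trans mk_range_le
    _ ≤ #(List s) := mk_le_of_surjective List.toFinset_surjective
    _ ≤ max #s ℵ₀ := (mk_list_le_max s).trans_eq (max_comm _ _)

section Weight

variable {X : Type u} [TopologicalSpace X]

theorem aleph0_le_weight : ℵ₀ ≤ weight X :=
  have : Nonempty {B : Set (Set X) // IsTopologicalBasis B} := ⟨⟨_, isTopologicalBasis_opens⟩⟩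
  le_ciInf fun _ => le_max_right _ _

theorem weight_le_of_isTopologicalBasis {B : Set (Set X)} (hB : IsTopologicalBasis B) :
    weight X ≤ max #B ℵ₀ :=
  ciInf_le' _ (⟨B, hB⟩ : {B : Set (Set X) // IsTopologicalBasis B})

theorem weight_le_of_eq_generateFrom {s : Set (Set X)}
    (hs : ‹TopologicalSpace X› = generateFrom s) : weight X ≤ max #s ℵ₀ :=
  calc weight X ≤ max #((fun f => ⋂₀ f) '' {f : Set (Set X) | f.Finite ∧ f ⊆ s}) ℵ₀ :=
        weight_le_of_isTopologicalBasis (isTopologicalBasis_of_subbasis hs)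
    _ ≤ max (max #s ℵ₀) ℵ₀ := max_le_max_right _ (mk_image_le.trans (mk_setOf_finite_subset_le s))
    _ = max #s ℵ₀ := by rw [max_assoc, max_self]

end Weight

section SeparatingFamily

variable {X : Type u} [TopologicalSpace X] [CompactSpace X] {Y : Type*} [TopologicalSpace Y]
  [T2Space Y] [SecondCountableTopology Y]

theorem eq_generateFrom_of_separatesPoints {ι : Type*} (g : ι → C(X, Y))
    (hsep : ∀ x y, x ≠ y → ∃ i, g i x ≠ g i y) :
    ‹TopologicalSpace X› = generateFrom (⋃ i, preimage (g i) '' countableBasis Y) := by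
  have hinj : Function.Injective fun x i => g i x := fun x y hxy => by
    by_contra hne
    obtain ⟨i, hi⟩ := hsep x y hne
    exact hi (congrFun hxy i)
  have he := ((continuous_pi fun i => (g i).continuous).isClosedEmbedding hinj).isEmbedding
  refine he.eq_induced.trans ?_
  rw [generateFrom_iUnion, Pi.topologicalSpace, induced_iInf]
  refine iInf_congr fun i => ?_
  rw [induced_compose]
  exact (congrArg (induced (g i)) (isBasis_countableBasis Y).eq_generateFrom).trans
    induced_generateFrom_eq

theorem weight_le_of_separatesPoints {ι : Type u} (g : ι → C(X, Y))
    (hsep : ∀ x y, x ≠ y → ∃ i, g i x ≠ g i y) : weight X ≤ max #ι ℵ₀ := by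
  have hcount : ∀ i, #(preimage (g i) '' countableBasis Y) ≤ ℵ₀ := fun i =>
    ((countable_countableBasis Y).image _).le_aleph0
  calc weight X ≤ max #(⋃ i, preimage (g i) '' countableBasis Y) ℵ₀ :=
        weight_le_of_eq_generateFrom (eq_generateFrom_of_separatesPoints g hsep)
    _ ≤ max (#ι * ℵ₀) ℵ₀ :=
        max_le_max_right _ ((mk_iUnion_le _).trans (by gcongr; exact ciSup_le' hcount))
    _ ≤ max #ι ℵ₀ :=
        max_le ((mul_le_max _ _).trans (by rw [max_assoc, max_self])) (le_max_right _ _)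

theorem exists_ne_forall_eq_of_lt_weight {ι : Type u} (g : ι → C(X, Y))
    (hg : max #ι ℵ₀ < weight X) : ∃ x y, x ≠ y ∧ ∀ i, g i x = g i y := by
  by_contra! hsep
  exact (weight_le_of_separatesPoints g hsep).not_gt hg

end SeparatingFamily

theorem exists_fun_of_forall_Iio_exists {ι α : Type*} [Preorder ι] [WellFoundedLT ι]
    (P : ∀ i : ι, (Iio i → α) → α → Prop) (h : ∀ i prev, ∃ a, P i prev a) :
    ∃ f : ι → α, ∀ i, P i (fun j => f j) (f i) := by
  choose step hstep using h
  refine ⟨wellFounded_lt.fix fun i prev => step i fun j => prev j j.2, fun i => ?_⟩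
  rw [wellFounded_lt.fix_eq]
  exact hstep i _

theorem exists_pairs_unseparated_by_predecessors {X : Type u} [TopologicalSpace X]
    [CompactSpace X] [T2Space X] (hX : ℵ₀ < weight X) {ι : Type u} [LinearOrder ι]
    [WellFoundedLT ι] (hι : ∀ i : ι, #(Iio i) < weight X) :
    ∃ (x y : ι → X) (w : ι → C(X, ℝ)),
      ∀ i, w i (x i) = 0 ∧ w i (y i) = 1 ∧ ∀ j < i, w j (x i) = w j (y i) := by
  obtain ⟨q, hq⟩ := exists_fun_of_forall_Iio_exists
    (fun i (prev : Iio i → X × X × C(X, ℝ)) (q : X × X × C(X, ℝ)) =>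
      q.2.2 q.1 = 0 ∧ q.2.2 q.2.1 = 1 ∧ ∀ j, (prev j).2.2 q.1 = (prev j).2.2 q.2.1)
    fun i prev => by
      obtain ⟨x, y, hxy, hprev⟩ :=
        exists_ne_forall_eq_of_lt_weight (fun j => (prev j).2.2) (max_lt (hι i) hX)
      obtain ⟨w, hwx, hwy, -⟩ := exists_continuous_zero_one_of_isClosed isClosed_singleton
        isClosed_singleton (disjoint_singleton.2 hxy)
      exact ⟨(x, y, w), hwx rfl, hwy rfl, hprev⟩
  exact ⟨fun i => (q i).1, fun i => (q i).2.1, fun i => (q i).2.2,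
    fun i => ⟨(hq i).1, (hq i).2.1, fun j hj => (hq i).2.2 ⟨j, hj⟩⟩⟩

noncomputable def clampedRamp : C(ℝ, ℝ) :=
  ⟨fun t => max (-1) (min 1 (1 - 4 * t)), by fun_prop⟩

theorem abs_clampedRamp_le (t : ℝ) : |clampedRamp t| ≤ 1 :=
  abs_le.2 ⟨le_max_left _ _, max_le (by norm_num) (min_le_left _ _)⟩

theorem clampedRamp_zero : clampedRamp 0 = 1 := by
  norm_num [clampedRamp]

theorem clampedRamp_of_half_le {t : ℝ} (ht : 1 / 2 ≤ t) : clampedRamp t = -1 := by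
  show max (-1) (min 1 (1 - 4 * t)) = -1
  rw [min_eq_right (by linarith), max_eq_left (by linarith)]

section NormTwo

variable {K : Type u} [TopologicalSpace K] [CompactSpace K]

theorem norm_clampedRamp_comp_le (f : C(K, ℝ)) : ‖clampedRamp.comp f‖ ≤ 1 :=
  (ContinuousMap.norm_le _ zero_le_one).2 fun x => abs_clampedRamp_le (f x)

theorem ContinuousMap.norm_sub_eq_two {f g : C(K, ℝ)} (hf : ‖f‖ ≤ 1) (hg : ‖g‖ ≤ 1) {z : K}
    (hfz : f z = 1) (hgz : g z = -1) : ‖f - g‖ = 2 := by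
  refine le_antisymm ((norm_sub_le f g).trans (by linarith)) ?_
  calc (2 : ℝ) = ‖(f - g) z‖ := by norm_num [hfz, hgz]
    _ ≤ ‖f - g‖ := (f - g).norm_coe_le_norm z

theorem norm_convexComb_le_one {f g p : C(K, ℝ)} (hf : ‖f‖ ≤ 1) (hg : ‖g‖ ≤ 1)
    (hp : ∀ z, p z ∈ Icc (0 : ℝ) 1) : ‖(1 - p) * f + p * g‖ ≤ 1 := by
  refine (ContinuousMap.norm_le _ zero_le_one).2 fun z => ?_
  have hfz := (f.norm_coe_le_norm z).trans hf
  have hgz := (g.norm_coe_le_norm z).trans hg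
  have := convex_closedBall (0 : ℝ) 1 (mem_closedBall_zero_iff.2 hfz)
    (mem_closedBall_zero_iff.2 hgz) (sub_nonneg.2 (hp z).2) (hp z).1 (by ring)
  simpa using this

end NormTwo

theorem exists_equilateral_of_pairwise {E : Type u} [SeminormedAddCommGroup E] {ι : Type v}
    (F : ι → E) (hb : ∀ i, ‖F i‖ ≤ 1) (hd : Pairwise fun i j => ‖F i - F j‖ = 2) :
    ∃ S : Set E, S ⊆ Metric.closedBall 0 1 ∧ lift.{v} #S = lift.{u} #ι ∧
      ∀ f ∈ S, ∀ g ∈ S, f ≠ g → ‖f - g‖ = 2 := by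
  have hinj : Function.Injective F := fun i j hij => by
    by_contra hne
    simpa [hij] using hd hne
  refine ⟨range F, ?_, mk_range_eq_of_injective hinj, ?_⟩
  · rintro _ ⟨i, rfl⟩
    simpa using hb i
  · rintro _ ⟨i, rfl⟩ _ ⟨j, rfl⟩ hne
    exact hd fun h => hne (congrArg F h)

section TwoCases

variable {K : Type u} [TopologicalSpace K] [CompactSpace K] [T2Space K]

theorem exists_nat_pairwise_norm_sub_eq_two [Infinite K] :
    ∃ F : ℕ → C(K, ℝ), (∀ n, ‖F n‖ ≤ 1) ∧ Pairwise fun m n => ‖F m - F n‖ = 2 := by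
  obtain ⟨U, hUinf, hUopen, hUdisj⟩ := exists_seq_infinite_isOpen_pairwise_disjoint K
  choose x hx using fun n => (hUinf n).nonempty
  choose f hfx hfU _ using fun n => exists_continuous_zero_one_of_isClosed isClosed_singleton
    (hUopen n).isClosed_compl (disjoint_singleton_left.2 (not_not.2 (hx n)))
  refine ⟨fun n => clampedRamp.comp (f n), fun n => norm_clampedRamp_comp_le _,
    fun m n hmn => ContinuousMap.norm_sub_eq_two (norm_clampedRamp_comp_le _)
      (norm_clampedRamp_comp_le _) (z := x m) ?_ ?_⟩
  · simp [hfx m rfl, clampedRamp_zero]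
  · have hxm : x m ∈ (U n)ᶜ := disjoint_left.1 (hUdisj hmn) (hx m)
    simpa [hfU n hxm] using clampedRamp_of_half_le (by norm_num : (1 : ℝ) / 2 ≤ 1)

theorem exists_pairwise_norm_sub_eq_two_of_homeomorph {A B : Set K} (hA : IsClosed A)
    (hB : IsClosed B) (hAB : Disjoint A B) (φ : A ≃ₜ B) (hwA : ℵ₀ < weight A) {ι : Type u}
    [LinearOrder ι] [WellFoundedLT ι] (hι : ∀ i : ι, #(Iio i) < weight A) :
    ∃ F : ι → C(K, ℝ), (∀ i, ‖F i‖ ≤ 1) ∧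
      Pairwise fun i j => ‖F i - F j‖ = 2 := by
  have : CompactSpace A := isCompact_iff_compactSpace.1 hA.isCompact
  obtain ⟨x, y, w, hw⟩ := exists_pairs_unseparated_by_predecessors hwA hι
  choose W hW using fun i => (w i).exists_restrict_eq hA
  choose V hV using fun i => (1 - (w i).comp (φ.symm : C(B, A))).exists_restrict_eq hB
  obtain ⟨p, hpA, hpB, hp⟩ := exists_continuous_zero_one_of_isClosed hA hB hAB
  set F : ι → C(K, ℝ) := fun i => (1 - p) * clampedRamp.comp (W i) + p * clampedRamp.comp (V i)
  have hFA (i : ι) (a : A) : F i a = clampedRamp (w i a) := by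
    simp [F, hpA a.2, ← hW i]
  have hFB (i : ι) (a : A) : F i (φ a) = clampedRamp (1 - w i a) := by
    have hVa : V i (φ a) = 1 - w i a := by simpa using ContinuousMap.congr_fun (hV i) (φ a)
    simp [F, hpB (φ a).2, hVa]
  have hF1 (i : ι) : ‖F i‖ ≤ 1 :=
    norm_convexComb_le_one (norm_clampedRamp_comp_le _) (norm_clampedRamp_comp_le _) hp
  have hF2 (j i : ι) (hji : j < i) : ‖F i - F j‖ = 2 := by
    obtain ⟨hwx, hwy, hprev⟩ := hw i
    rcases le_or_gt (1 / 2) (w j (x i)) with hx | hx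
    · refine ContinuousMap.norm_sub_eq_two (hF1 i) (hF1 j) (z := x i) ?_ ?_
      · rw [hFA, hwx, clampedRamp_zero]
      · rw [hFA, clampedRamp_of_half_le hx]
    · refine ContinuousMap.norm_sub_eq_two (hF1 i) (hF1 j) (z := φ (y i)) ?_ ?_
      · rw [hFB, hwy, sub_self, clampedRamp_zero]
      · rw [hFB, clampedRamp_of_half_le (by linarith [hprev j hji])]
  refine ⟨F, hF1, fun i j hij => hij.lt_or_gt.elim (fun h => ?_) (hF2 j i)⟩
  simpa only [norm_sub_rev] using hF2 i j h

end TwoCases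

/-- If `K` contains two disjoint closed homeomorphic subspaces of weight `w(K)`, then the closed
unit ball of `C(K)` contains a `2`-equilateral set of cardinality `w(K)`. -/
theorem statement3 (K : Type u) [TopologicalSpace K] [CompactSpace K] [T2Space K] [Infinite K]
    (h : ∃ A B : Set K, IsClosed A ∧ IsClosed B ∧ Disjoint A B ∧ Nonempty (A ≃ₜ B) ∧
      weight A = weight K ∧ weight B = weight K) :
    ∃ S : Set C(K, ℝ), S ⊆ Metric.closedBall 0 1 ∧ #S = weight K ∧
      ∀ f ∈ S, ∀ g ∈ S, f ≠ g → ‖f - g‖ = 2 := by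
  obtain ⟨A, B, hA, hB, hAB, ⟨φ⟩, hwA, -⟩ := h
  rcases (aleph0_le_weight (X := K)).eq_or_lt with hK | hK
  · obtain ⟨F, hb, hd⟩ := exists_nat_pairwise_norm_sub_eq_two (K := K)
    obtain ⟨S, hS, hcard, hdist⟩ := exists_equilateral_of_pairwise F hb hd
    exact ⟨S, hS, by simpa [← hK] using hcard, hdist⟩
  · have hι (i : (weight K).ord.ToType) : #(Iio i) < weight A :=
      (mk_Iio_lt i (by rw [mk_ord_toType, Ordinal.type_toType])).trans_eq (by simp [hwA])
    obtain ⟨F, hb, hd⟩ := exists_pairwise_norm_sub_eq_two_of_homeomorph hA hB hAB φ (hwA ▸ hK) hι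
    obtain ⟨S, hS, hcard, hdist⟩ := exists_equilateral_of_pairwise F hb hd
    exact ⟨S, hS, by simpa using hcard, hdist⟩
end

section
/- Let K be an infinite compact Hausdorff space and κ an infinite cardinal such that there exists a family {x_α : α < κ} of points of K which is left-separated or right-separated. Then the closed unit ball of C(K) contains a 2-equilateral set of cardinality κ. -/
open Cardinal

/-- A family of points indexed by a linearly ordered type is left-separated if no point lies in
the closure of the set of points with smaller index. -/
def LeftSeparated {X : Type u} [TopologicalSpace X] {ι : Type v} [LT ι] (x : ι → X) : Prop :=
  ∀ a : ι, x a ∉ closure (x '' {b | b < a})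

/-- A family of points indexed by a linearly ordered type is right-separated if no point lies in
the closure of the set of points with larger index. -/
def RightSeparated {X : Type u} [TopologicalSpace X] {ι : Type v} [LT ι] (x : ι → X) : Prop :=
  ∀ a : ι, x a ∉ closure (x '' {b | a < b})

/-!
For a left-separated family `x`, complete regularity gives functions `f a` with values in
`[-1, 1]`, equal to `1` at `x a` and to `-1` at every `x b` with `b < a`. For `b < a` the difference
`f b - f a` takes the value `2` at `x b`, so any two of these functions are at distance `2`.
A right-separated family is left-separated for the reversed order.
-/

theorem exists_continuousMap_eq_one_eqOn_neg_one {X : Type*} [TopologicalSpace X]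
    [CompletelyRegularSpace X] {s : Set X} (hs : IsClosed s) {x : X} (hx : x ∉ s) :
    ∃ g : C(X, ℝ), g x = 1 ∧ Set.EqOn g (-1) s ∧ ∀ y, |g y| ≤ 1 := by
  obtain ⟨f, hf, hfx, hfs⟩ := CompletelyRegularSpace.completely_regular x s hs hx
  refine ⟨⟨fun y => 1 - 2 * (f y : ℝ), by fun_prop⟩, ?_, fun y hy => ?_, fun y => ?_⟩
  · simp [hfx]
  · simp only [ContinuousMap.coe_mk, Pi.neg_apply, Pi.one_apply, hfs hy]
    norm_num
  · have := (f y).2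
    simp only [ContinuousMap.coe_mk, abs_le, Set.mem_Icc] at this ⊢
    constructor <;> linarith

theorem ContinuousMap.norm_sub_eq_two_s11 {X : Type*} [TopologicalSpace X] [CompactSpace X]
    {f g : C(X, ℝ)} (hf : ‖f‖ ≤ 1) (hg : ‖g‖ ≤ 1) {y : X} (hfy : f y = 1) (hgy : g y = -1) :
    ‖f - g‖ = 2 := by
  refine le_antisymm ((norm_sub_le f g).trans (by linarith)) ?_
  calc (2 : ℝ) = (f - g) y := by simp [hfy, hgy]; norm_num
    _ ≤ ‖f - g‖ := (f - g).apply_le_norm y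

theorem RightSeparated.leftSeparated_ofDual {X : Type*} [TopologicalSpace X] {ι : Type*} [LT ι]
    {x : ι → X} (hx : RightSeparated x) : LeftSeparated (x ∘ OrderDual.ofDual) :=
  hx

theorem LeftSeparated.exists_pairwise_norm_sub_eq_two {K : Type*} [TopologicalSpace K]
    [CompactSpace K] [CompletelyRegularSpace K] {ι : Type*} [LinearOrder ι] {x : ι → K}
    (hx : LeftSeparated x) :
    ∃ f : ι → C(K, ℝ), (∀ a, ‖f a‖ ≤ 1) ∧ Pairwise fun a b => ‖f a - f b‖ = 2 := by
  choose f hfx hf_lt hf_abs using fun a =>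
    exists_continuousMap_eq_one_eqOn_neg_one isClosed_closure (hx a)
  have hnorm : ∀ a, ‖f a‖ ≤ 1 := fun a =>
    (ContinuousMap.norm_le _ zero_le_one).mpr fun y => (hf_abs a y).trans_eq' (Real.norm_eq_abs _)
  have hlt : ∀ {a b}, b < a → ‖f b - f a‖ = 2 := fun {a b} hba =>
    ContinuousMap.norm_sub_eq_two_s11 (hnorm b) (hnorm a) (hfx b)
      (hf_lt a (subset_closure (Set.mem_image_of_mem x hba)))
  refine ⟨f, hnorm, fun a b hab => ?_⟩
  rcases hab.lt_or_gt with h | h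
  · exact hlt h
  · rw [norm_sub_rev]
    exact hlt h

theorem statement11_general (K : Type u) [TopologicalSpace K] [CompactSpace K] [T2Space K]
    (κ : Cardinal.{u})
    (h : ∃ x : κ.ord.ToType → K, LeftSeparated x ∨ RightSeparated x) :
    ∃ A : Set C(K, ℝ), A ⊆ Metric.closedBall 0 1 ∧ #A = κ ∧
      ∀ f ∈ A, ∀ g ∈ A, f ≠ g → ‖f - g‖ = 2 := by
  obtain ⟨f, hnorm, hdist⟩ : ∃ f : κ.ord.ToType → C(K, ℝ),
      (∀ a, ‖f a‖ ≤ 1) ∧ Pairwise fun a b => ‖f a - f b‖ = 2 := by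
    obtain ⟨x, hL | hR⟩ := h
    · exact hL.exists_pairwise_norm_sub_eq_two
    · exact hR.leftSeparated_ofDual.exists_pairwise_norm_sub_eq_two
  have hinj : Function.Injective f := fun a b hab => by
    by_contra hne
    simpa [hab] using hdist hne
  refine ⟨Set.range f, ?_, ?_, ?_⟩
  · rintro _ ⟨a, rfl⟩
    simpa using hnorm a
  · rw [mk_range_eq f hinj, mk_ord_toType]
  · rintro _ ⟨a, rfl⟩ _ ⟨b, rfl⟩ hne
    exact hdist (ne_of_apply_ne f hne)

/-- If `K` admits a left-separated or a right-separated family of points indexed by the ordinals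
below `κ`, then the closed unit ball of `C(K)` contains a `2`-equilateral set of
cardinality `κ`. -/
theorem statement11 (K : Type u) [TopologicalSpace K] [CompactSpace K] [T2Space K] [Infinite K]
    (κ : Cardinal.{u}) (hκ : ℵ₀ ≤ κ)
    (h : ∃ x : κ.ord.ToType → K, LeftSeparated x ∨ RightSeparated x) :
    ∃ A : Set C(K, ℝ), A ⊆ Metric.closedBall 0 1 ∧ #A = κ ∧
      ∀ f ∈ A, ∀ g ∈ A, f ≠ g → ‖f - g‖ = 2 :=
  statement11_general K κ h
end
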